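/- Let ℛ' be a nonempty finite family of subsets of a finite column set U that has the consecutive-ones property and whose overlap graph is connected, let Q be the union of the members of ℛ', and let Z ⊆ U. Then ℛ' ∪ {Z} fails to have the consecutive-ones property if and only if there exist a consecutive-ones ordering σ of ℛ' and columns a, b, c lying in three pairwise distinct constrained Venn classes of ℛ' with σ(a) < σ(b) < σ(c) such that either (a ∈ Z, b ∉ Z, c ∈ Z) or (a ∉ Z, b ∈ Z, c ∉ Z and Z is not a subset of Q). -/

import Mathlib

/-- Two sets *overlap* if they intersect but neither is a subset of the other. -/
def Overlaps {α : Type*} [DecidableEq α] (A B : Finset α) : Prop :=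
  (A ∩ B).Nonempty ∧ ¬ A ⊆ B ∧ ¬ B ⊆ A

instance {α : Type*} [DecidableEq α] (A B : Finset α) : Decidable (Overlaps A B) :=
  inferInstanceAs (Decidable (_ ∧ _ ∧ _))

/-- The overlap graph of a family of sets. -/
def overlapGraph {α : Type*} [DecidableEq α] (𝓡 : Finset (Finset α)) :
    SimpleGraph {R // R ∈ 𝓡} where
  Adj A B := Overlaps A.1 B.1
  symm := ⟨by
    rintro A B ⟨h1, h2, h3⟩
    exact ⟨by rwa [Finset.inter_comm], h3, h2⟩⟩
  loopless := ⟨fun A h => h.2.1 le_rfl⟩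

/-- A set `S` is *convex* (occupies consecutive positions) within the column set `U`
under the position assignment `σ`. -/
def ConvexIn {α : Type*} (U : Finset α) (σ : α → ℕ) (S : Set α) : Prop :=
  ∀ x ∈ U, ∀ y ∈ U, ∀ z ∈ U, σ x ≤ σ y → σ y ≤ σ z → x ∈ S → z ∈ S → y ∈ S

/-- `σ` is a consecutive-ones ordering of the columns `U` for the family `𝓡`:
it linearly orders `U` (injectivity) and every member of `𝓡` is an interval of it. -/
def IsC1POrdering {α : Type*} (U : Finset α) (𝓡 : Finset (Finset α)) (σ : α → ℕ) : Prop :=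
  Set.InjOn σ U ∧ ∀ R ∈ 𝓡, ConvexIn U σ (R : Set α)

/-- The family `𝓡` of subsets of the column set `U` has the consecutive-ones property. -/
def HasC1P {α : Type*} (U : Finset α) (𝓡 : Finset (Finset α)) : Prop :=
  ∃ σ : α → ℕ, IsC1POrdering U 𝓡 σ

/-- `𝓡` is a minimal non-C1P matrix (Tucker matrix) over column set `U`. -/
def MinimalNonC1P {α : Type*} [DecidableEq α] (U : Finset α) (𝓡 : Finset (Finset α)) : Prop :=
  (∀ R ∈ 𝓡, R ⊆ U) ∧ ¬ HasC1P U 𝓡 ∧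
    ∀ 𝓡' ⊆ 𝓡, ∀ U' ⊆ U, (𝓡' ≠ 𝓡 ∨ U' ≠ U) →
      HasC1P U' (𝓡'.image (· ∩ U'))

/-!
The consecutive-ones ordering of a connected family is unique up to reversal on its
constrained Venn classes. This is proved by induction, removing a member `R` that keeps the
family connected: `R`, `⋃ (F.erase R)` and the Venn classes of `F.erase R` are intervals of
every ordering, and the betweenness they force transfers the order of any pair to the pairs
separated by `R`. Hence a violation in one ordering `σ` reappears, up to reversal, in every
ordering of `insert Z F`; a 1-0-1 pattern is then impossible at once, and in a 0-1-0 pattern a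
column of `Z \ ⋃ F` would have to lie beyond both outer columns.

Conversely, if no ordering shows a violation, sort the columns by the position of their Venn
class in `σ` and rearrange them inside each class. If `Z ⊆ ⋃ F`, every class strictly between
the first and the last class meeting `Z` lies inside `Z`, so `Z` becomes an interval once its
columns go last in the first and first in the last of these classes. If `Z ⊄ ⋃ F`, the
constrained part of `Z` has to reach an end of the order: otherwise, as a connected family
never has exactly two constrained classes, a 1-0-1 or a 0-1-0 pattern appears.
-/

section Development

variable {α : Type*}

def SameVennClass (F : Finset (Finset α)) (x y : α) : Prop := ∀ R ∈ F, (x ∈ R ↔ y ∈ R)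

def IsConstrained (F : Finset (Finset α)) (x : α) : Prop := ∃ R ∈ F, x ∈ R

namespace SameVennClass

variable {F : Finset (Finset α)} {x y z : α}

lemma refl (F : Finset (Finset α)) (x : α) : SameVennClass F x x := fun _ _ => Iff.rfl

lemma symm (h : SameVennClass F x y) : SameVennClass F y x := fun R hR => (h R hR).symm

lemma trans (h : SameVennClass F x y) (h' : SameVennClass F y z) : SameVennClass F x z :=
  fun R hR => (h R hR).trans (h' R hR)

lemma isConstrained (h : SameVennClass F x y) (hx : IsConstrained F x) : IsConstrained F y :=
  let ⟨R, hR, hxR⟩ := hx; ⟨R, hR, (h R hR).1 hxR⟩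

end SameVennClass

lemma ne_of_not_sameVennClass {F : Finset (Finset α)} {x y : α} (h : ¬ SameVennClass F x y) :
    x ≠ y := by
  rintro rfl; exact h (SameVennClass.refl F x)

lemma IsConstrained.mem {U : Finset α} {F : Finset (Finset α)} (hsub : ∀ R ∈ F, R ⊆ U)
    {x : α} (hx : IsConstrained F x) : x ∈ U :=
  let ⟨R, hR, hxR⟩ := hx; hsub R hR hxR

def StrictBetween (p q r : ℕ) : Prop := p < q ∧ q < r ∨ r < q ∧ q < p

section Orderings

variable {U : Finset α} {F : Finset (Finset α)} {σ : α → ℕ}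

lemma ConvexIn.mem_of_strictBetween {S : Set α} (h : ConvexIn U σ S) {x y z : α}
    (hx : x ∈ U) (hy : y ∈ U) (hz : z ∈ U) (hb : StrictBetween (σ x) (σ y) (σ z))
    (hxS : x ∈ S) (hzS : z ∈ S) : y ∈ S := by
  rcases hb with ⟨h1, h2⟩ | ⟨h1, h2⟩
  · exact h x hx y hy z hz h1.le h2.le hxS hzS
  · exact h z hz y hy x hx h1.le h2.le hzS hxS

lemma strictBetween_of_convexIn {S₁ S₂ : Set α} (hσ : Set.InjOn σ U) (h₁ : ConvexIn U σ S₁)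
    (h₂ : ConvexIn U σ S₂) {a b c : α} (ha : a ∈ U) (hb : b ∈ U) (hc : c ∈ U) (ha₁ : a ∈ S₁)
    (ha₂ : a ∉ S₂) (hb₁ : b ∈ S₁) (hb₂ : b ∈ S₂) (hc₁ : c ∉ S₁) (hc₂ : c ∈ S₂) :
    StrictBetween (σ a) (σ b) (σ c) := by
  have hab : σ a ≠ σ b := fun h => ha₂ (hσ ha hb h ▸ hb₂)
  have hbc : σ b ≠ σ c := fun h => hc₁ (hσ hb hc h ▸ hb₁)
  have hac : σ a ≠ σ c := fun h => hc₁ (hσ ha hc h ▸ ha₁)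
  have not_a : ¬ StrictBetween (σ b) (σ a) (σ c) :=
    fun h => ha₂ (h₂.mem_of_strictBetween hb ha hc h hb₂ hc₂)
  have not_c : ¬ StrictBetween (σ a) (σ c) (σ b) :=
    fun h => hc₁ (h₁.mem_of_strictBetween ha hc hb h ha₁ hb₁)
  unfold StrictBetween at *
  omega

lemma ConvexIn.subset_gap {R : Finset α} (h : ConvexIn U σ (R : Set α)) (hRU : R ⊆ U)
    {a c w : α} (ha : a ∈ U) (hc : c ∈ U) (haR : a ∉ R) (hcR : c ∉ R) (hwR : w ∈ R)
    (haw : σ a < σ w) (hwc : σ w < σ c) : ∀ u ∈ R, σ a < σ u ∧ σ u < σ c := by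
  intro u hu
  constructor
  · by_contra! hua
    exact haR (h u (hRU hu) a ha w (hRU hwR) hua haw.le hu hwR)
  · by_contra! hcu
    exact hcR (h w (hRU hwR) c hc u (hRU hu) hwc.le hcu hwR hu)

lemma IsC1POrdering.mono {F' : Finset (Finset α)} (h : IsC1POrdering U F σ) (hF : F' ⊆ F) :
    IsC1POrdering U F' σ :=
  ⟨h.1, fun R hR => h.2 R (hF hR)⟩

/-- Only the values on `U` matter, and there the subtraction does not truncate. -/
noncomputable def revOrder (U : Finset α) (σ : α → ℕ) (x : α) : ℕ := U.sup σ - σ x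

lemma revOrder_le_revOrder {x y : α} (hx : x ∈ U) (hy : y ∈ U) :
    revOrder U σ x ≤ revOrder U σ y ↔ σ y ≤ σ x := by
  have := Finset.le_sup (f := σ) hx
  have := Finset.le_sup (f := σ) hy
  unfold revOrder; omega

lemma revOrder_lt_revOrder {x y : α} (hx : x ∈ U) (hy : y ∈ U) :
    revOrder U σ x < revOrder U σ y ↔ σ y < σ x := by
  simpa only [not_le] using (revOrder_le_revOrder hy hx).not

lemma IsC1POrdering.rev (h : IsC1POrdering U F σ) : IsC1POrdering U F (revOrder U σ) := by
  refine ⟨fun x hx y hy hxy => h.1 hx hy ?_, fun R hR x hx y hy z hz hxy hyz hxR hzR => ?_⟩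
  · exact le_antisymm ((revOrder_le_revOrder hy hx).1 hxy.ge)
      ((revOrder_le_revOrder hx hy).1 hxy.le)
  · rw [revOrder_le_revOrder hx hy] at hxy
    rw [revOrder_le_revOrder hy hz] at hyz
    exact h.2 R hR z hz y hy x hx hyz hxy hzR hxR

lemma lex_key_le_iff {N a b s t : ℕ} (hs : s < N) (ht : t < N) :
    a * N + s ≤ b * N + t ↔ toLex (a, s) ≤ toLex (b, t) := by
  rw [Prod.Lex.toLex_le_toLex]
  dsimp only
  constructor
  · intro h
    rcases lt_trichotomy a b with hab | rfl | hab
    · exact Or.inl hab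
    · exact Or.inr ⟨rfl, by omega⟩
    · nlinarith
  · rintro (hab | ⟨rfl, hst⟩)
    · nlinarith
    · omega

lemma hasC1P_of_lex {𝓡 : Finset (Finset α)} (hσ : Set.InjOn σ U) (level : α → ℕ)
    (h : ∀ R ∈ 𝓡, ∀ x ∈ U, ∀ y ∈ U, ∀ z ∈ U, toLex (level x, σ x) ≤ toLex (level y, σ y) →
      toLex (level y, σ y) ≤ toLex (level z, σ z) → x ∈ R → z ∈ R → y ∈ R) :
    HasC1P U 𝓡 := by
  have hN : ∀ x ∈ U, σ x < U.sup σ + 1 := fun x hx => Nat.lt_succ_of_le (Finset.le_sup hx)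
  have key_le : ∀ x ∈ U, ∀ y ∈ U,
      level x * (U.sup σ + 1) + σ x ≤ level y * (U.sup σ + 1) + σ y ↔
        toLex (level x, σ x) ≤ toLex (level y, σ y) :=
    fun x hx y hy => lex_key_le_iff (hN x hx) (hN y hy)
  refine ⟨fun x => level x * (U.sup σ + 1) + σ x, fun x hx y hy hxy => hσ hx hy ?_,
    fun R hR x hx y hy z hz hxy hyz => h R hR x hx y hy z hz ((key_le x hx y hy).1 hxy)
      ((key_le y hy z hz).1 hyz)⟩
  have := le_antisymm ((key_le x hx y hy).1 hxy.le) ((key_le y hy x hx).1 hxy.ge)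
  exact (Prod.ext_iff.1 (toLex.injective this)).2

end Orderings

section Connected

variable [DecidableEq α] {U : Finset α} {F : Finset (Finset α)} {σ : α → ℕ}

lemma reflTransGen_of_connected (hconn : (overlapGraph F).Connected) {A B : Finset α}
    (hA : A ∈ F) (hB : B ∈ F) : Relation.ReflTransGen (overlapGraph F).Adj ⟨A, hA⟩ ⟨B, hB⟩ :=
  (SimpleGraph.reachable_iff_reflTransGen _ _).1 (hconn.preconnected _ _)

/-- Consecutive members of a walk in the overlap graph intersect, so their intervals chain
up. -/
lemma IsC1POrdering.convexIn_isConstrained (hsub : ∀ R ∈ F, R ⊆ U)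
    (hσ : IsC1POrdering U F σ) (hconn : (overlapGraph F).Connected) :
    ConvexIn U σ {u | IsConstrained F u} := by
  rintro x hx y hy z hz hxy hyz ⟨A, hA, hxA⟩ ⟨B, hB, hzB⟩
  suffices key : ∀ A' : {R // R ∈ F}, Relation.ReflTransGen (overlapGraph F).Adj A' ⟨B, hB⟩ →
      ∀ x ∈ A'.1, σ x ≤ σ y → IsConstrained F y from
    key _ (reflTransGen_of_connected hconn hA hB) x hxA hxy
  intro A' hwalk
  induction hwalk using Relation.ReflTransGen.head_induction_on with
  | refl => exact fun x hxB hxy => ⟨B, hB, hσ.2 B hB x (hsub B hB hxB) y hy z hz hxy hyz hxB hzB⟩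
  | @head C D hCD _ ih =>
    intro x hxC hxy
    obtain ⟨w, hw⟩ := hCD.1
    obtain ⟨hwC, hwD⟩ := Finset.mem_inter.1 hw
    rcases le_or_gt (σ y) (σ w) with hyw | hwy
    · exact ⟨C.1, C.2, hσ.2 _ C.2 x (hsub _ C.2 hxC) y hy w (hsub _ C.2 hwC) hxy hyw hxC hwC⟩
    · exact ih w hwD hwy.le

/-- A member separating `a` from `b` but not from `c` lies strictly between `a` and `c`, and
so does every member reachable from it by overlaps: one containing `a` would also contain `c`,
hence the whole gap, and could not overlap its predecessor. But some member contains `a`. -/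
lemma IsC1POrdering.sameVennClass_of_le (hsub : ∀ R ∈ F, R ⊆ U)
    (hσ : IsC1POrdering U F σ) (hconn : (overlapGraph F).Connected) {a b c : α}
    (ha : IsConstrained F a) (hac : SameVennClass F a c) (haU : a ∈ U) (hbU : b ∈ U)
    (hcU : c ∈ U) (hab : σ a ≤ σ b) (hbc : σ b ≤ σ c) : SameVennClass F a b := by
  intro R hR
  by_cases haR : a ∈ R
  · exact iff_of_true haR (hσ.2 R hR a haU b hbU c hcU hab hbc haR ((hac R hR).1 haR))
  refine iff_of_false haR fun hbR => ?_
  have hcR : c ∉ R := fun h => haR ((hac R hR).2 h)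
  have hab' : σ a < σ b := lt_of_le_of_ne hab fun h => haR (hσ.1 haU hbU h ▸ hbR)
  have hbc' : σ b < σ c := lt_of_le_of_ne hbc fun h => hcR (hσ.1 hbU hcU h ▸ hbR)
  have inside : ∀ D : {R // R ∈ F}, Relation.ReflTransGen (overlapGraph F).Adj ⟨R, hR⟩ D →
      a ∉ D.1 ∧ ∀ u ∈ D.1, σ a < σ u ∧ σ u < σ c := by
    intro D hwalk
    induction hwalk with
    | refl => exact ⟨haR, (hσ.2 R hR).subset_gap (hsub R hR) haU hcU haR hcR hbR hab' hbc'⟩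
    | @tail C D _ hCD ih =>
      obtain ⟨w, hw⟩ := hCD.1
      obtain ⟨hwC, hwD⟩ := Finset.mem_inter.1 hw
      have haD : a ∉ D.1 := fun haD => hCD.2.1 fun u hu =>
        hσ.2 D.1 D.2 a haU u (hsub _ C.2 hu) c hcU (ih.2 u hu).1.le (ih.2 u hu).2.le haD
          ((hac D.1 D.2).1 haD)
      have hcD : c ∉ D.1 := fun hcD => haD ((hac D.1 D.2).2 hcD)
      exact ⟨haD, (hσ.2 D.1 D.2).subset_gap (hsub _ D.2) haU hcU haD hcD hwD
        (ih.2 w hwC).1 (ih.2 w hwC).2⟩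
  obtain ⟨A, hA, haA⟩ := ha
  exact absurd haA (inside ⟨A, hA⟩ (reflTransGen_of_connected hconn hR hA)).1

lemma IsC1POrdering.convexIn_sameVennClass (hsub : ∀ R ∈ F, R ⊆ U)
    (hσ : IsC1POrdering U F σ) (hconn : (overlapGraph F).Connected) {x : α}
    (hx : IsConstrained F x) : ConvexIn U σ {u | SameVennClass F x u} :=
  fun a ha _ hb c hc hab hbc (hxa : SameVennClass F x a) (hxc : SameVennClass F x c) =>
    hxa.trans (hσ.sameVennClass_of_le hsub hconn (hxa.isConstrained hx)
      (hxa.symm.trans hxc) ha hb hc hab hbc)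

/-- A leaf of a spanning tree of the overlap graph. -/
lemma exists_connected_erase (hconn : (overlapGraph F).Connected) (hF : 1 < F.card) :
    ∃ R ∈ F, (overlapGraph (F.erase R)).Connected ∧ ∃ S ∈ F.erase R, Overlaps R S := by
  obtain ⟨A, hA, B, hB, hAB⟩ := Finset.one_lt_card.1 hF
  have : Nontrivial {R // R ∈ F} :=
    ⟨⟨A, hA⟩, ⟨B, hB⟩, fun h => hAB (congrArg Subtype.val h)⟩
  obtain ⟨v, hv⟩ := hconn.exists_connected_induce_compl_singleton_of_finite_nontrivial
  let e : (overlapGraph F).induce {v}ᶜ ≃g overlapGraph (F.erase v.1) :=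
    { toFun := fun u => ⟨u.1.1, Finset.mem_erase.2 ⟨fun h => u.2 (Subtype.ext h), u.1.2⟩⟩
      invFun := fun u => ⟨⟨u.1, Finset.mem_of_mem_erase u.2⟩,
        fun h => Finset.ne_of_mem_erase u.2 (congrArg Subtype.val h)⟩
      left_inv := fun _ => rfl
      right_inv := fun _ => rfl
      map_rel_iff' := Iff.rfl }
  obtain ⟨w, hw⟩ := exists_ne v
  obtain hvw | ⟨S, hvS, -⟩ := ((SimpleGraph.reachable_iff_reflTransGen _ _).1
    (hconn.preconnected v w)).cases_head
  · exact absurd hvw.symm hw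
  · exact ⟨v.1, v.2, e.connected_iff.1 hv, S.1,
      Finset.mem_erase.2 ⟨fun h => hvS.ne (Subtype.ext h).symm, S.2⟩, hvS⟩

/-- A member containing only one of two Venn classes would contain only columns of that class
and could not overlap anything. -/
lemma exists_third_class (hconn : (overlapGraph F).Connected) {b c : α}
    (hb : IsConstrained F b) (hc : IsConstrained F c) (hbc : ¬ SameVennClass F b c) :
    ∃ w, IsConstrained F w ∧ ¬ SameVennClass F b w ∧ ¬ SameVennClass F c w := by
  by_contra! hall
  have key : ∀ b c, IsConstrained F c → (∀ w, IsConstrained F w → ¬ SameVennClass F b w →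
      SameVennClass F c w) → ∀ M ∈ F, b ∈ M → c ∉ M → False := by
    intro b c hc hall M hM hbM hcM
    have hpure : ∀ t ∈ M, SameVennClass F b t := fun t ht => by
      by_contra hbt
      exact hcM (((hall t ⟨M, hM, ht⟩ hbt) M hM).2 ht)
    obtain ⟨N, hN, hcN⟩ := hc
    obtain hMN | ⟨X, hMX, -⟩ := (reflTransGen_of_connected hconn hM hN).cases_head
    · obtain rfl : M = N := congrArg Subtype.val hMN
      exact hcM hcN
    obtain ⟨t, ht⟩ := hMX.1
    obtain ⟨htM, htX⟩ := Finset.mem_inter.1 ht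
    exact hMX.2.1 fun s hs => (((hpure s hs).symm.trans (hpure t htM)) X.1 X.2).2 htX
  obtain ⟨M, hM, hMbc⟩ : ∃ M ∈ F, ¬ (b ∈ M ↔ c ∈ M) := by
    by_contra! h; exact hbc h
  by_cases hbM : b ∈ M
  · exact key b c hc (fun w hw hbw => hall w hw hbw) M hM hbM
      fun hcM => hMbc (iff_of_true hbM hcM)
  · exact key c b hb (fun w hw hcw => by_contra fun hbw => hcw (hall w hw hbw))
      M hM (by tauto) hbM

end Connected

def SameOrder (σ τ : α → ℕ) (x y : α) : Prop := (σ x < σ y ↔ τ x < τ y)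

def Aligned (F : Finset (Finset α)) (σ τ : α → ℕ) : Prop :=
  ∀ x y, IsConstrained F x → IsConstrained F y → ¬ SameVennClass F x y → SameOrder σ τ x y

section SameOrder

variable {U : Finset α} {F : Finset (Finset α)} {σ τ : α → ℕ} {x y : α}

lemma SameOrder.symm (h : SameOrder σ τ x y) (hσ : σ x ≠ σ y) (hτ : τ x ≠ τ y) :
    SameOrder σ τ y x := by
  unfold SameOrder at *; omega

lemma sameOrder_iff_of_strictBetween {a b c : α} (hσ : StrictBetween (σ a) (σ b) (σ c))
    (hτ : StrictBetween (τ a) (τ b) (τ c)) :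
    (SameOrder σ τ a b ↔ SameOrder σ τ b c) ∧ (SameOrder σ τ a b ↔ SameOrder σ τ a c) := by
  unfold SameOrder StrictBetween at *; omega

lemma sameOrder_revOrder_iff (hx : x ∈ U) (hy : y ∈ U) (hτ : τ x ≠ τ y) :
    SameOrder σ (revOrder U τ) x y ↔ ¬ SameOrder σ τ x y := by
  unfold SameOrder; rw [revOrder_lt_revOrder hx hy]; omega

/-- Two sets that are intervals of every ordering force the same betweenness in all of
them. -/
lemma sameOrder_iff_of_convexIn {S₁ S₂ : Set α}
    (h₁ : ∀ ρ, IsC1POrdering U F ρ → ConvexIn U ρ S₁)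
    (h₂ : ∀ ρ, IsC1POrdering U F ρ → ConvexIn U ρ S₂)
    (hσ : IsC1POrdering U F σ) (hτ : IsC1POrdering U F τ) {a b c : α} (ha : a ∈ U)
    (hb : b ∈ U) (hc : c ∈ U) (ha₁ : a ∈ S₁) (ha₂ : a ∉ S₂) (hb₁ : b ∈ S₁) (hb₂ : b ∈ S₂)
    (hc₁ : c ∉ S₁) (hc₂ : c ∈ S₂) :
    (SameOrder σ τ a b ↔ SameOrder σ τ b c) ∧ (SameOrder σ τ a b ↔ SameOrder σ τ a c) :=
  sameOrder_iff_of_strictBetween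
    (strictBetween_of_convexIn hσ.1 (h₁ σ hσ) (h₂ σ hσ) ha hb hc ha₁ ha₂ hb₁ hb₂ hc₁ hc₂)
    (strictBetween_of_convexIn hτ.1 (h₁ τ hτ) (h₂ τ hτ) ha hb hc ha₁ ha₂ hb₁ hb₂ hc₁ hc₂)

lemma aligned_of_card_le_one (hF : F.card ≤ 1) : Aligned F σ τ := by
  rintro x y ⟨A, hA, hxA⟩ ⟨B, hB, hyB⟩ hxy
  refine absurd (fun T hT => ?_) hxy
  obtain rfl := Finset.card_le_one.1 hF A hA T hT
  obtain rfl := Finset.card_le_one.1 hF A hA B hB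
  exact iff_of_true hxA hyB

end SameOrder

section Erase

variable [DecidableEq α] {U : Finset α} {F : Finset (Finset α)} {R S : Finset α}
  {σ τ : α → ℕ} {x y : α}

lemma sameVennClass_of_erase (h : SameVennClass (F.erase R) x y) (hR : x ∈ R ↔ y ∈ R) :
    SameVennClass F x y := by
  intro T hT
  by_cases hTR : T = R
  · exact hTR ▸ hR
  · exact h T (Finset.mem_erase.2 ⟨hTR, hT⟩)

lemma mem_of_not_isConstrained_erase (hx : IsConstrained F x)
    (hx' : ¬ IsConstrained (F.erase R) x) : x ∈ R := by
  obtain ⟨T, hT, hxT⟩ := hx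
  by_contra hxR
  exact hx' ⟨T, Finset.mem_erase.2 ⟨fun h => hxR (h ▸ hxT), hT⟩, hxT⟩

lemma forall_subset_of_erase (hsub : ∀ A ∈ F, A ⊆ U) : ∀ A ∈ F.erase R, A ⊆ U :=
  fun A hA => hsub A (Finset.mem_of_mem_erase hA)

lemma convexIn_isConstrained_erase (hsub : ∀ A ∈ F, A ⊆ U)
    (hconn' : (overlapGraph (F.erase R)).Connected) (ρ : α → ℕ) (hρ : IsC1POrdering U F ρ) :
    ConvexIn U ρ {u | IsConstrained (F.erase R) u} :=
  (hρ.mono (Finset.erase_subset R F)).convexIn_isConstrained (forall_subset_of_erase hsub)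
    hconn'

/-- A column only in `R` is compared through a column of `S \ R` or of `R ∩ S`. -/
lemma aligned_of_sameOrder_erase (hsub : ∀ A ∈ F, A ⊆ U) (hR : R ∈ F)
    (hconn' : (overlapGraph (F.erase R)).Connected) (hS : S ∈ F.erase R) (hRS : Overlaps R S)
    (hσ : IsC1POrdering U F σ) (hτ : IsC1POrdering U F τ)
    (h' : ∀ x y, IsConstrained (F.erase R) x → IsConstrained (F.erase R) y →
      ¬ SameVennClass F x y → SameOrder σ τ x y) :
    Aligned F σ τ := by
  have hQ' := convexIn_isConstrained_erase hsub hconn'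
  have hRc : ∀ ρ, IsC1POrdering U F ρ → ConvexIn U ρ (R : Set α) := fun ρ hρ => hρ.2 R hR
  have hSU : S ⊆ U := forall_subset_of_erase hsub S hS
  have one_side : ∀ x y, IsConstrained (F.erase R) x → IsConstrained F y →
      ¬ SameVennClass F x y → SameOrder σ τ x y := by
    intro x y hx hy hxy
    by_cases hy' : IsConstrained (F.erase R) y
    · exact h' x y hx hy' hxy
    have hyR := mem_of_not_isConstrained_erase hy hy'
    have hxU := hx.mem (forall_subset_of_erase hsub)
    have hyU := hy.mem hsub
    by_cases hxR : x ∈ R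
    · obtain ⟨z, hzS, hzR⟩ := Finset.not_subset.1 hRS.2.2
      have hz : IsConstrained (F.erase R) z := ⟨S, hS, hzS⟩
      exact (sameOrder_iff_of_convexIn hQ' hRc hσ hτ (hSU hzS) hxU hyU hz hzR hx hxR hy'
        hyR).1.1 (h' z x hz hx fun h => hzR ((h R hR).2 hxR))
    · obtain ⟨w, hw⟩ := hRS.1
      obtain ⟨hwR, hwS⟩ := Finset.mem_inter.1 hw
      have hw' : IsConstrained (F.erase R) w := ⟨S, hS, hwS⟩
      exact (sameOrder_iff_of_convexIn hQ' hRc hσ hτ hxU (hSU hwS) hyU hx hxR hw' hwR hy'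
        hyR).2.1 (h' x w hx hw' fun h => hxR ((h R hR).2 hwR))
  intro x y hx hy hxy
  have hne : x ≠ y := ne_of_not_sameVennClass hxy
  by_cases hx' : IsConstrained (F.erase R) x
  · exact one_side x y hx' hy hxy
  by_cases hy' : IsConstrained (F.erase R) y
  · exact (one_side y x hy' hx fun h => hxy h.symm).symm
      (hσ.1.ne (hy.mem hsub) (hx.mem hsub) hne.symm) (hτ.1.ne (hy.mem hsub) (hx.mem hsub) hne.symm)
  refine absurd (sameVennClass_of_erase (fun T hT => iff_of_false (fun h => hx' ⟨T, hT, h⟩)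
    (fun h => hy' ⟨T, hT, h⟩)) ?_) hxy
  exact iff_of_true (mem_of_not_isConstrained_erase hx hx')
    (mem_of_not_isConstrained_erase hy hy')

lemma aligned_of_separated (hsub : ∀ A ∈ F, A ⊆ U) (hR : R ∈ F)
    (hconn' : (overlapGraph (F.erase R)).Connected) (hS : S ∈ F.erase R) (hRS : Overlaps R S)
    (hσ : IsC1POrdering U F σ) (hτ : IsC1POrdering U F τ) (hal : Aligned (F.erase R) σ τ)
    (hsep : ∀ x y, x ∈ R → IsConstrained (F.erase R) x → y ∉ R → IsConstrained (F.erase R) y →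
      SameVennClass (F.erase R) x y → SameOrder σ τ x y) :
    Aligned F σ τ := by
  refine aligned_of_sameOrder_erase hsub hR hconn' hS hRS hσ hτ fun x y hx hy hxy => ?_
  by_cases hxy' : SameVennClass (F.erase R) x y
  · have hsub' := forall_subset_of_erase (R := R) hsub
    have hne : x ≠ y := ne_of_not_sameVennClass hxy
    by_cases hxR : x ∈ R <;> by_cases hyR : y ∈ R
    · exact absurd (sameVennClass_of_erase hxy' (iff_of_true hxR hyR)) hxy
    · exact hsep x y hxR hx hyR hy hxy'
    · exact (hsep y x hyR hy hxR hx hxy'.symm).symm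
        (hσ.1.ne (hy.mem hsub') (hx.mem hsub') hne.symm)
        (hτ.1.ne (hy.mem hsub') (hx.mem hsub') hne.symm)
    · exact absurd (sameVennClass_of_erase hxy' (iff_of_false hxR hyR)) hxy
  · exact hal x y hx hy hxy'

/-- Every `x ∈ R` constrained in `F.erase R` lies between `n` and every `y ∉ R` constrained
in `F.erase R`. -/
lemma sameOrder_across (hsub : ∀ A ∈ F, A ⊆ U) (hR : R ∈ F)
    (hconn' : (overlapGraph (F.erase R)).Connected)
    (hσ : IsC1POrdering U F σ) (hτ : IsC1POrdering U F τ) {n x₀ y₀ : α} (hnR : n ∈ R)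
    (hn : ¬ IsConstrained (F.erase R) n) (hx₀R : x₀ ∈ R) (hx₀ : IsConstrained (F.erase R) x₀)
    (hy₀R : y₀ ∉ R) (hy₀ : IsConstrained (F.erase R) y₀) (h₀ : SameOrder σ τ x₀ y₀)
    (hxR : x ∈ R) (hx : IsConstrained (F.erase R) x) (hyR : y ∉ R)
    (hy : IsConstrained (F.erase R) y) : SameOrder σ τ x y := by
  have hQ' := convexIn_isConstrained_erase hsub hconn'
  have hRc : ∀ ρ, IsC1POrdering U F ρ → ConvexIn U ρ (R : Set α) := fun ρ hρ => hρ.2 R hR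
  have across := fun {b c : α} (hbR : b ∈ R) (hb : IsConstrained (F.erase R) b) (hcR : c ∉ R)
      (hc : IsConstrained (F.erase R) c) =>
    sameOrder_iff_of_convexIn hRc hQ' hσ hτ (hsub R hR hnR) (hsub R hR hbR)
      (hc.mem (forall_subset_of_erase hsub)) hnR hn hbR hb hcR hc
  have hnx₀ := (across hx₀R hx₀ hy₀R hy₀).1.2 h₀
  have hny := (across hx₀R hx₀ hyR hy).2.1 hnx₀
  exact (across hxR hx hyR hy).1.1 ((across hxR hx hyR hy).2.2 hny)

lemma sameOrder_of_separated (hsub : ∀ A ∈ F, A ⊆ U) (hR : R ∈ F)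
    (hconn' : (overlapGraph (F.erase R)).Connected) (hS : S ∈ F.erase R) (hRS : Overlaps R S)
    (hσ : IsC1POrdering U F σ) (hτ : IsC1POrdering U F τ) (hal : Aligned (F.erase R) σ τ)
    (htwo : ∃ x₀ y₀, IsConstrained (F.erase R) x₀ ∧ IsConstrained (F.erase R) y₀ ∧
      ¬ SameVennClass (F.erase R) x₀ y₀)
    (hxR : x ∈ R) (hx : IsConstrained (F.erase R) x) (hyR : y ∉ R)
    (hy : IsConstrained (F.erase R) y) (hxy : SameVennClass (F.erase R) x y) :
    SameOrder σ τ x y := by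
  have hsub' := forall_subset_of_erase (R := R) hsub
  have hRc : ∀ ρ, IsC1POrdering U F ρ → ConvexIn U ρ (R : Set α) := fun ρ hρ => hρ.2 R hR
  by_cases hw : ∃ w ∈ R, IsConstrained (F.erase R) w ∧ ¬ SameVennClass (F.erase R) x w
  · -- `x` lies between `w` and `y`: `R` separates `y`, the class of `x` separates `w`
    obtain ⟨w, hwR, hw, hxw⟩ := hw
    have hC : ∀ ρ, IsC1POrdering U F ρ → ConvexIn U ρ {u | SameVennClass (F.erase R) x u} :=
      fun ρ hρ => (hρ.mono (Finset.erase_subset R F)).convexIn_sameVennClass hsub' hconn' hx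
    exact (sameOrder_iff_of_convexIn hRc hC hσ hτ (hw.mem hsub') (hx.mem hsub') (hy.mem hsub')
      hwR hxw hxR (SameVennClass.refl _ x) hyR hxy).1.1 (hal w x hw hx fun h => hxw h.symm)
  · -- then `R` meets `⋃ (F.erase R)` only in the class of `x`, and sticks out of it at `n`
    push Not at hw
    obtain ⟨v, hv⟩ := hRS.1
    obtain ⟨hvR, hvS⟩ := Finset.mem_inter.1 hv
    obtain ⟨n, hnR, hnS⟩ := Finset.not_subset.1 hRS.2.1
    have hn : ¬ IsConstrained (F.erase R) n := fun hn =>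
      hnS (((hw n hnR hn).symm.trans (hw v hvR ⟨S, hS, hvS⟩) S hS).2 hvS)
    obtain ⟨z, hz, hxz⟩ : ∃ z, IsConstrained (F.erase R) z ∧ ¬ SameVennClass (F.erase R) x z := by
      obtain ⟨x₀, y₀, hx₀, hy₀, h₀⟩ := htwo
      by_cases hxx₀ : SameVennClass (F.erase R) x x₀
      · exact ⟨y₀, hy₀, fun h => h₀ (hxx₀.symm.trans h)⟩
      · exact ⟨x₀, hx₀, hxx₀⟩
    have hzR : z ∉ R := fun hzR => hxz (hw z hzR hz)
    exact sameOrder_across hsub hR hconn' hσ hτ hnR hn hxR hx hzR hz (hal x z hx hz hxz)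
      hxR hx hyR hy

/-- `F.erase R` is a single Venn class, so the orientation of one pair across `R` can be
chosen freely, and it determines all others. -/
lemma aligned_or_aligned_revOrder_of_sameVennClass (hsub : ∀ A ∈ F, A ⊆ U) (hR : R ∈ F)
    (hconn' : (overlapGraph (F.erase R)).Connected) (hS : S ∈ F.erase R) (hRS : Overlaps R S)
    (hσ : IsC1POrdering U F σ) (hτ : IsC1POrdering U F τ)
    (hone : ∀ x y, IsConstrained (F.erase R) x → IsConstrained (F.erase R) y →
      SameVennClass (F.erase R) x y) :
    Aligned F σ τ ∨ Aligned F σ (revOrder U τ) := by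
  have hal : ∀ τ', Aligned (F.erase R) σ τ' :=
    fun τ' x y hx hy hxy => absurd (hone x y hx hy) hxy
  obtain ⟨v, hv⟩ := hRS.1
  obtain ⟨hvR, hvS⟩ := Finset.mem_inter.1 hv
  obtain ⟨s, hsS, hsR⟩ := Finset.not_subset.1 hRS.2.2
  obtain ⟨n, hnR, hnS⟩ := Finset.not_subset.1 hRS.2.1
  have hv' : IsConstrained (F.erase R) v := ⟨S, hS, hvS⟩
  have hs' : IsConstrained (F.erase R) s := ⟨S, hS, hsS⟩
  have hn : ¬ IsConstrained (F.erase R) n := fun hn => hnS ((hone v n hv' hn S hS).1 hvS)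
  have aligned := fun {τ'} (hτ' : IsC1POrdering U F τ') (h₀ : SameOrder σ τ' v s) =>
    aligned_of_separated hsub hR hconn' hS hRS hσ hτ' (hal τ') fun _ _ hxR hx hyR hy _ =>
      sameOrder_across hsub hR hconn' hσ hτ' hnR hn hvR hv' hsR hs' h₀ hxR hx hyR hy
  by_cases h₀ : SameOrder σ τ v s
  · exact Or.inl (aligned hτ h₀)
  · have hvU := hv'.mem (forall_subset_of_erase hsub)
    have hsU := hs'.mem (forall_subset_of_erase hsub)
    exact Or.inr (aligned hτ.rev ((sameOrder_revOrder_iff hvU hsU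
      (hτ.1.ne hvU hsU fun h => hsR (h ▸ hvR))).2 h₀))

end Erase

theorem aligned_or_aligned_revOrder [DecidableEq α] {U : Finset α} {F : Finset (Finset α)}
    {σ τ : α → ℕ} (hsub : ∀ A ∈ F, A ⊆ U) (hconn : (overlapGraph F).Connected)
    (hσ : IsC1POrdering U F σ) (hτ : IsC1POrdering U F τ) :
    Aligned F σ τ ∨ Aligned F σ (revOrder U τ) := by
  induction hcard : F.card using Nat.strong_induction_on generalizing F with
  | _ k ih =>
  rcases le_or_gt F.card 1 with h1 | h1
  · exact Or.inl (aligned_of_card_le_one h1)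
  obtain ⟨R, hR, hconn', S, hS, hRS⟩ := exists_connected_erase hconn h1
  by_cases htwo : ∃ x₀ y₀, IsConstrained (F.erase R) x₀ ∧ IsConstrained (F.erase R) y₀ ∧
      ¬ SameVennClass (F.erase R) x₀ y₀
  · have step := fun {τ'} (hτ' : IsC1POrdering U F τ') (hal : Aligned (F.erase R) σ τ') =>
      aligned_of_separated hsub hR hconn' hS hRS hσ hτ' hal fun _ _ hxR hx hyR hy =>
        sameOrder_of_separated hsub hR hconn' hS hRS hσ hτ' hal htwo hxR hx hyR hy
    rcases ih _ (hcard ▸ Finset.card_erase_lt_of_mem hR) (forall_subset_of_erase hsub) hconn'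
      (hσ.mono (Finset.erase_subset R F)) (hτ.mono (Finset.erase_subset R F)) rfl with hal | hal
    · exact Or.inl (step hτ hal)
    · exact Or.inr (step hτ.rev hal)
  · push Not at htwo
    exact aligned_or_aligned_revOrder_of_sameVennClass hsub hR hconn' hS hRS hσ hτ htwo

noncomputable def classStart (U : Finset α) (F : Finset (Finset α)) (σ : α → ℕ) (x : α) : ℕ :=
  sInf (σ '' {u | u ∈ U ∧ SameVennClass F x u})

open scoped Classical in
noncomputable def zone (U : Finset α) (F : Finset (Finset α)) (Z : Finset α) (σ : α → ℕ)
    (x : α) : ℕ :=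
  if IsConstrained F x then classStart U F σ x + 1 else if x ∈ Z then U.sup σ + 2 else 0

noncomputable def sortKey (U : Finset α) (F : Finset (Finset α)) (Z : Finset α) (σ : α → ℕ)
    (bit : α → ℕ) (x : α) : ℕ ×ₗ ℕ :=
  toLex (2 * zone U F Z σ x + bit x, σ x)

section ClassStart

variable {U : Finset α} {F : Finset (Finset α)} {Z : Finset α} {σ : α → ℕ} {x y : α}

lemma exists_classStart_eq (hx : x ∈ U) :
    ∃ u ∈ U, SameVennClass F x u ∧ σ u = classStart U F σ x := by
  obtain ⟨u, ⟨hu, hxu⟩, hσu⟩ := Nat.sInf_mem (s := σ '' {u | u ∈ U ∧ SameVennClass F x u})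
    ⟨σ x, x, ⟨hx, SameVennClass.refl F x⟩, rfl⟩
  exact ⟨u, hu, hxu, hσu⟩

lemma classStart_le_self (hx : x ∈ U) : classStart U F σ x ≤ σ x :=
  Nat.sInf_le ⟨x, ⟨hx, SameVennClass.refl F x⟩, rfl⟩

lemma classStart_congr (h : SameVennClass F x y) : classStart U F σ x = classStart U F σ y := by
  unfold classStart
  congr 2
  ext u
  exact and_congr_right fun _ => ⟨h.symm.trans, h.trans⟩

lemma sameVennClass_of_classStart_eq (hσ : Set.InjOn σ U) (hx : x ∈ U) (hy : y ∈ U)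
    (h : classStart U F σ x = classStart U F σ y) : SameVennClass F x y := by
  obtain ⟨u, hu, hxu, hσu⟩ := exists_classStart_eq (F := F) (σ := σ) hx
  obtain ⟨v, hv, hyv, hσv⟩ := exists_classStart_eq (F := F) (σ := σ) hy
  obtain rfl : u = v := hσ hu hv (by omega)
  exact hxu.trans hyv.symm

lemma classStart_lt_sup (hx : x ∈ U) : classStart U F σ x < U.sup σ + 1 :=
  Nat.lt_succ_of_le ((classStart_le_self hx).trans (Finset.le_sup hx))

lemma zone_of_isConstrained (hx : IsConstrained F x) :
    zone U F Z σ x = classStart U F σ x + 1 :=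
  if_pos hx

lemma zone_of_mem (hx : ¬ IsConstrained F x) (hxZ : x ∈ Z) : zone U F Z σ x = U.sup σ + 2 := by
  simp only [zone, if_neg hx, if_pos hxZ]

lemma zone_of_not_mem (hx : ¬ IsConstrained F x) (hxZ : x ∉ Z) : zone U F Z σ x = 0 := by
  simp only [zone, if_neg hx, if_neg hxZ]

lemma zone_le (hx : x ∈ U) : zone U F Z σ x ≤ U.sup σ + 2 := by
  have := classStart_lt_sup (F := F) (σ := σ) hx
  unfold zone
  split_ifs <;> omega

lemma sortKey_le_sortKey_iff {bit : α → ℕ} :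
    sortKey U F Z σ bit x ≤ sortKey U F Z σ bit y ↔
      2 * zone U F Z σ x + bit x < 2 * zone U F Z σ y + bit y ∨
        2 * zone U F Z σ x + bit x = 2 * zone U F Z σ y + bit y ∧ σ x ≤ σ y :=
  Prod.Lex.toLex_le_toLex

lemma mem_of_zone_le {R : Finset α} (hsub : ∀ R ∈ F, R ⊆ U) (hσ : IsC1POrdering U F σ)
    (hR : R ∈ F) {z : α} (hy : y ∈ U) (hxR : x ∈ R) (hzR : z ∈ R)
    (hxy : zone U F Z σ x ≤ zone U F Z σ y) (hyz : zone U F Z σ y ≤ zone U F Z σ z) :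
    y ∈ R := by
  have hx : IsConstrained F x := ⟨R, hR, hxR⟩
  have hz : IsConstrained F z := ⟨R, hR, hzR⟩
  rw [zone_of_isConstrained hx] at hxy
  rw [zone_of_isConstrained hz] at hyz
  by_cases hy' : IsConstrained F y
  · rw [zone_of_isConstrained hy'] at hxy hyz
    obtain ⟨u, hu, hxu, hσu⟩ := exists_classStart_eq (F := F) (σ := σ) (hx.mem hsub)
    obtain ⟨v, hv, hyv, hσv⟩ := exists_classStart_eq (F := F) (σ := σ) hy
    obtain ⟨w, hw, hzw, hσw⟩ := exists_classStart_eq (F := F) (σ := σ) (hz.mem hsub)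
    have hvR : v ∈ R := hσ.2 R hR u hu v hv w hw (by omega) (by omega) ((hxu R hR).1 hxR)
      ((hzw R hR).1 hzR)
    exact (hyv R hR).2 hvR
  · have := classStart_lt_sup (F := F) (σ := σ) (hz.mem hsub)
    by_cases hyZ : y ∈ Z
    · rw [zone_of_mem hy' hyZ] at hxy hyz; omega
    · rw [zone_of_not_mem hy' hyZ] at hxy; omega

variable [DecidableEq α]

lemma lt_of_classStart_lt (hsub : ∀ R ∈ F, R ⊆ U) (hσ : IsC1POrdering U F σ)
    (hconn : (overlapGraph F).Connected) (hx : IsConstrained F x) (hy : y ∈ U)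
    (h : classStart U F σ x < classStart U F σ y) : σ x < σ y := by
  have hxU := hx.mem hsub
  obtain ⟨u, hu, hxu, hσu⟩ := exists_classStart_eq (F := F) (σ := σ) hxU
  by_contra! hyx
  have hxy : SameVennClass F x y := hσ.convexIn_sameVennClass hsub hconn hx u hu y hy x hxU
    (hσu ▸ (h.trans_le (classStart_le_self hy)).le) hyx hxu (SameVennClass.refl F x)
  exact h.ne (classStart_congr hxy)

lemma classStart_le_classStart (hsub : ∀ R ∈ F, R ⊆ U) (hσ : IsC1POrdering U F σ)
    (hconn : (overlapGraph F).Connected) (hx : x ∈ U) (hy : IsConstrained F y)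
    (h : σ x ≤ σ y) : classStart U F σ x ≤ classStart U F σ y := by
  by_contra! hyx
  exact (lt_of_classStart_lt hsub hσ hconn hy hx hyx).not_ge h

lemma sortKey_le_of_le (hsub : ∀ R ∈ F, R ⊆ U) (hσ : IsC1POrdering U F σ)
    (hconn : (overlapGraph F).Connected) {bit : α → ℕ} (hbit : ∀ x, bit x ≤ 1)
    (hx : IsConstrained F x) (hy : IsConstrained F y) (hxy : σ x ≤ σ y)
    (hbxy : SameVennClass F x y → bit x = bit y) :
    sortKey U F Z σ bit x ≤ sortKey U F Z σ bit y := by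
  rw [sortKey_le_sortKey_iff, zone_of_isConstrained hx, zone_of_isConstrained hy]
  rcases (classStart_le_classStart hsub hσ hconn (hx.mem hsub) hy hxy).lt_or_eq with hlt | heq
  · have := hbit x; have := hbit y; omega
  · rw [heq, hbxy (sameVennClass_of_classStart_eq hσ.1 (hx.mem hsub) (hy.mem hsub) heq)]
    exact Or.inr ⟨rfl, hxy⟩

end ClassStart

section Construction

variable [DecidableEq α] {U : Finset α} {F : Finset (Finset α)} {Z : Finset α} {σ : α → ℕ}

lemma hasC1P_insert_of_bit (hsub : ∀ R ∈ F, R ⊆ U) (hσ : IsC1POrdering U F σ) (bit : α → ℕ)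
    (hbit : ∀ x, bit x ≤ 1)
    (hZ : ∀ x ∈ U, ∀ y ∈ U, ∀ z ∈ U, sortKey U F Z σ bit x ≤ sortKey U F Z σ bit y →
      sortKey U F Z σ bit y ≤ sortKey U F Z σ bit z → x ∈ Z → z ∈ Z → y ∈ Z) :
    HasC1P U (insert Z F) := by
  refine hasC1P_of_lex hσ.1 (fun x => 2 * zone U F Z σ x + bit x) fun R hR => ?_
  rcases Finset.mem_insert.1 hR with rfl | hR
  · exact hZ
  intro x _ y hy z _ hxy hyz hxR hzR
  rw [Prod.Lex.toLex_le_toLex] at hxy hyz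
  have := hbit x; have := hbit y; have := hbit z
  exact mem_of_zone_le (Z := Z) hsub hσ hR hy hxR hzR (by omega) (by omega)

def RightClosed (U : Finset α) (F : Finset (Finset α)) (Z : Finset α) (σ : α → ℕ) : Prop :=
  ∀ b ∈ Z, IsConstrained F b → ∀ c ∈ U, IsConstrained F c → ¬ SameVennClass F b c →
    σ b < σ c → c ∈ Z

/-- Putting `Z` last in each zone makes it a final segment. -/
lemma hasC1P_insert_of_rightClosed (hsub : ∀ R ∈ F, R ⊆ U) (hσ : IsC1POrdering U F σ)
    (hconn : (overlapGraph F).Connected) (h : RightClosed U F Z σ) :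
    HasC1P U (insert Z F) := by
  refine hasC1P_insert_of_bit hsub hσ (fun x => if x ∈ Z then 1 else 0)
    (fun x => by split_ifs <;> omega) fun x _ y hy _ _ hxy _ hxZ _ => ?_
  by_contra hyZ
  rw [sortKey_le_sortKey_iff, if_pos hxZ, if_neg hyZ] at hxy
  by_cases hx : IsConstrained F x
  · by_cases hy' : IsConstrained F y
    · rw [zone_of_isConstrained hx, zone_of_isConstrained hy'] at hxy
      have hxy' : ¬ SameVennClass F x y := fun hxy' => by
        rw [classStart_congr hxy'] at hxy; omega
      exact hyZ (h x hxZ hx y hy hy' hxy' (lt_of_classStart_lt hsub hσ hconn hx hy (by omega)))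
    · rw [zone_of_not_mem hy' hyZ] at hxy; omega
  · have := zone_le (F := F) (Z := Z) (σ := σ) hy
    rw [zone_of_mem hx hxZ] at hxy; omega

end Construction

def IsViolation (F : Finset (Finset α)) (Z : Finset α) (σ : α → ℕ) (a b c : α) : Prop :=
  IsConstrained F a ∧ IsConstrained F b ∧ IsConstrained F c ∧
    ¬ SameVennClass F a b ∧ ¬ SameVennClass F b c ∧ ¬ SameVennClass F a c ∧
    σ a < σ b ∧ σ b < σ c ∧
    ((a ∈ Z ∧ b ∉ Z ∧ c ∈ Z) ∨ (a ∉ Z ∧ b ∈ Z ∧ c ∉ Z ∧ ¬ ∀ x ∈ Z, IsConstrained F x))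

def HasViolation (U : Finset α) (F : Finset (Finset α)) (Z : Finset α) (σ : α → ℕ) : Prop :=
  ∃ a ∈ U, ∃ b ∈ U, ∃ c ∈ U, IsViolation F Z σ a b c

lemma HasViolation.of_revOrder {U : Finset α} {F : Finset (Finset α)} {Z : Finset α}
    {σ : α → ℕ} (h : HasViolation U F Z (revOrder U σ)) : HasViolation U F Z σ := by
  obtain ⟨a, ha, b, hb, c, hc, hac, hbc, hcc, hab, hbc', hac', h₁, h₂, hpat⟩ := h
  rw [revOrder_lt_revOrder ha hb] at h₁
  rw [revOrder_lt_revOrder hb hc] at h₂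
  exact ⟨c, hc, b, hb, a, ha, hcc, hbc, hac, fun h => hbc' h.symm, fun h => hab h.symm,
    fun h => hac' h.symm, h₂, h₁, by tauto⟩

/-- By uniqueness of the ordering, `b` lies between `a` and `c` in every ordering of
`insert Z F`. -/
lemma not_hasC1P_insert_of_hasViolation [DecidableEq α] {U : Finset α} {F : Finset (Finset α)}
    {Z : Finset α} {σ : α → ℕ} (hsub : ∀ R ∈ F, R ⊆ U) (hconn : (overlapGraph F).Connected)
    (hZU : Z ⊆ U) (hσ : IsC1POrdering U F σ) (h : HasViolation U F Z σ) :
    ¬ HasC1P U (insert Z F) := by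
  rintro ⟨τ, hτ⟩
  obtain ⟨a, ha, b, hb, c, hc, hac, hbc, hcc, hab, hbc', -, h₁, h₂, hpat⟩ := h
  have hτF := hτ.mono (Finset.subset_insert Z F)
  have hZ : ConvexIn U τ Z := hτ.2 Z (Finset.mem_insert_self Z F)
  have hbtw : StrictBetween (τ a) (τ b) (τ c) := by
    rcases aligned_or_aligned_revOrder hsub hconn hσ hτF with hal | hal
    · exact Or.inl ⟨(hal a b hac hbc hab).1 h₁, (hal b c hbc hcc hbc').1 h₂⟩
    · exact Or.inr ⟨(revOrder_lt_revOrder hb hc).1 ((hal b c hbc hcc hbc').1 h₂),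
        (revOrder_lt_revOrder ha hb).1 ((hal a b hac hbc hab).1 h₁)⟩
  rcases hpat with ⟨haZ, hbZ, hcZ⟩ | ⟨haZ, hbZ, hcZ, hZQ⟩
  · exact hbZ (hZ.mem_of_strictBetween ha hb hc hbtw haZ hcZ)
  · -- a column of `Z` outside `⋃ F` would lie beyond both `a` and `c`
    push Not at hZQ
    obtain ⟨ζ, hζZ, hζ⟩ := hZQ
    have hQ := hτF.convexIn_isConstrained hsub hconn
    have hζa := strictBetween_of_convexIn hτ.1 hZ hQ (hZU hζZ) hb ha hζZ hζ hbZ hbc haZ hac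
    have hζc := strictBetween_of_convexIn hτ.1 hZ hQ (hZU hζZ) hb hc hζZ hζ hbZ hbc hcZ hcc
    unfold StrictBetween at *
    omega

open scoped Classical in
noncomputable def spanBit (F : Finset (Finset α)) (Z : Finset α) (zr x : α) : ℕ :=
  if SameVennClass F zr x then (if x ∈ Z then 0 else 1) else (if x ∈ Z then 1 else 0)

section Subset

variable {U : Finset α} {F : Finset (Finset α)} {Z : Finset α} {σ : α → ℕ} {zr : α}

lemma spanBit_le_one {x : α} : spanBit F Z zr x ≤ 1 := by
  unfold spanBit; split_ifs <;> omega

lemma spanBit_congr {x y : α} (hx : x ∈ Z) (hy : y ∈ Z) (hxy : SameVennClass F x y) :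
    spanBit F Z zr x = spanBit F Z zr y := by
  classical
  have : SameVennClass F zr x ↔ SameVennClass F zr y := ⟨(·.trans hxy), (·.trans hxy.symm)⟩
  simp only [spanBit, if_pos hx, if_pos hy]
  exact if_congr this rfl rfl

variable [DecidableEq α]

/-- Such a `y` lies in neither class of `zl`, `zr`, hence strictly between them. -/
lemma hasViolation_of_sortKey_between (hsub : ∀ R ∈ F, R ⊆ U) (hσ : IsC1POrdering U F σ)
    (hconn : (overlapGraph F).Connected) {zl y : α} (hzl : zl ∈ Z) (hzr : zr ∈ Z)
    (hzlc : IsConstrained F zl) (hzrc : IsConstrained F zr) (hy : y ∈ U) (hyZ : y ∉ Z)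
    (h₁ : sortKey U F Z σ (spanBit F Z zr) zl ≤ sortKey U F Z σ (spanBit F Z zr) y)
    (h₂ : sortKey U F Z σ (spanBit F Z zr) y ≤ sortKey U F Z σ (spanBit F Z zr) zr) :
    HasViolation U F Z σ := by
  rw [sortKey_le_sortKey_iff, zone_of_isConstrained hzlc] at h₁
  rw [sortKey_le_sortKey_iff, zone_of_isConstrained hzrc] at h₂
  have hbzl : spanBit F Z zr zl ≤ 1 := spanBit_le_one
  have hy' : IsConstrained F y := by
    by_contra hy'
    rw [zone_of_not_mem hy' hyZ] at h₁
    have : spanBit F Z zr y ≤ 1 := spanBit_le_one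
    omega
  rw [zone_of_isConstrained hy'] at h₁ h₂
  have hbzr : spanBit F Z zr zr = 0 := by
    simp only [spanBit, if_pos (SameVennClass.refl F zr), if_pos hzr]
  by_cases hry : SameVennClass F zr y
  · have hby : spanBit F Z zr y = 1 := by simp only [spanBit, if_pos hry, if_neg hyZ]
    rw [classStart_congr hry] at h₂
    omega
  have hby : spanBit F Z zr y = 0 := by simp only [spanBit, if_neg hry, if_neg hyZ]
  by_cases hly : SameVennClass F zl y
  · have hbzl : spanBit F Z zr zl = 1 := by
      simp only [spanBit, if_neg fun h : SameVennClass F zr zl => hry (h.trans hly), if_pos hzl]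
    rw [classStart_congr hly] at h₁
    omega
  have hlr : classStart U F σ zl < classStart U F σ y ∧
      classStart U F σ y < classStart U F σ zr := by
    have := mt (sameVennClass_of_classStart_eq hσ.1 (hzlc.mem hsub) hy) hly
    have := mt (sameVennClass_of_classStart_eq hσ.1 (hzrc.mem hsub) hy) hry
    omega
  refine ⟨zl, hzlc.mem hsub, y, hy, zr, hzrc.mem hsub, hzlc, hy', hzrc, hly,
    fun h => hry h.symm, fun h => ?_, lt_of_classStart_lt hsub hσ hconn hzlc hy hlr.1,
    lt_of_classStart_lt hsub hσ hconn hy' (hzrc.mem hsub) hlr.2, Or.inl ⟨hzl, hyZ, hzr⟩⟩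
  rw [classStart_congr h] at hlr
  omega

lemma hasC1P_insert_of_subset (hsub : ∀ R ∈ F, R ⊆ U) (hσ : IsC1POrdering U F σ)
    (hconn : (overlapGraph F).Connected) (hZQ : ∀ x ∈ Z, IsConstrained F x)
    (hno : ¬ HasViolation U F Z σ) :
    HasC1P U (insert Z F) := by
  rcases Z.eq_empty_or_nonempty with rfl | hZ
  · exact hasC1P_insert_of_bit hsub hσ (fun _ => 0) (fun _ => zero_le_one)
      fun x _ _ _ _ _ _ _ hx => absurd hx (Finset.notMem_empty x)
  obtain ⟨zl, hzl, hzl_min⟩ := Z.exists_min_image σ hZ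
  obtain ⟨zr, hzr, hzr_max⟩ := Z.exists_max_image σ hZ
  have key_le : ∀ x ∈ Z, ∀ y ∈ Z, σ x ≤ σ y →
      sortKey U F Z σ (spanBit F Z zr) x ≤ sortKey U F Z σ (spanBit F Z zr) y :=
    fun x hx y hy hxy => sortKey_le_of_le hsub hσ hconn (fun _ => spanBit_le_one) (hZQ x hx)
      (hZQ y hy) hxy (spanBit_congr hx hy)
  refine hasC1P_insert_of_bit hsub hσ (spanBit F Z zr) (fun _ => spanBit_le_one)
    fun x _ y hy z _ hxy hyz hxZ hzZ => by_contra fun hyZ => hno ?_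
  exact hasViolation_of_sortKey_between hsub hσ hconn hzl hzr (hZQ zl hzl) (hZQ zr hzr) hy hyZ
    ((key_le zl hzl x hxZ (hzl_min x hxZ)).trans hxy)
    (hyz.trans (key_le z hzZ zr hzr (hzr_max z hzZ)))

end Subset

lemma exists_first_last {F : Finset (Finset α)} {Z : Finset α} {σ : α → ℕ}
    (hZ : ∃ b ∈ Z, IsConstrained F b) :
    ∃ zl ∈ Z, ∃ zr ∈ Z, IsConstrained F zl ∧ IsConstrained F zr ∧
      ∀ b ∈ Z, IsConstrained F b → σ zl ≤ σ b ∧ σ b ≤ σ zr := by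
  classical
  obtain ⟨b, hb, hbc⟩ := hZ
  have hZc : (Z.filter (IsConstrained F)).Nonempty := ⟨b, Finset.mem_filter.2 ⟨hb, hbc⟩⟩
  obtain ⟨zl, hzl, hzl_min⟩ := (Z.filter (IsConstrained F)).exists_min_image σ hZc
  obtain ⟨zr, hzr, hzr_max⟩ := (Z.filter (IsConstrained F)).exists_max_image σ hZc
  rw [Finset.mem_filter] at hzl hzr
  exact ⟨zl, hzl.1, zr, hzr.1, hzl.2, hzr.2, fun b hb hbc =>
    ⟨hzl_min b (Finset.mem_filter.2 ⟨hb, hbc⟩), hzr_max b (Finset.mem_filter.2 ⟨hb, hbc⟩)⟩⟩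

section Dichotomy

variable [DecidableEq α] {U : Finset α} {F : Finset (Finset α)} {Z : Finset α} {σ : α → ℕ}

lemma hasViolation_of_not_sameVennClass_right (hsub : ∀ R ∈ F, R ⊆ U)
    (hσ : IsC1POrdering U F σ)
    (hconn : (overlapGraph F).Connected) (hZQ : ¬ ∀ x ∈ Z, IsConstrained F x)
    {zl zr c₁ c₂ : α} (hzl : zl ∈ Z) (hzr : zr ∈ Z) (hc₁ : c₁ ∉ Z) (hc₂ : c₂ ∉ Z)
    (hzlc : IsConstrained F zl) (hzrc : IsConstrained F zr) (hc₁c : IsConstrained F c₁)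
    (hc₂c : IsConstrained F c₂) (h₁ : ¬ SameVennClass F zl c₁) (hσ₁ : σ zl < σ c₁)
    (h₂ : ¬ SameVennClass F zr c₂) (hσ₂ : σ c₂ < σ zr) (h₁₂ : ¬ SameVennClass F c₁ zr) :
    HasViolation U F Z σ := by
  have mem := fun {x} (hx : IsConstrained F x) => hx.mem hsub
  rcases (hσ.1.ne (mem hc₁c) (mem hzrc) fun h => hc₁ (h ▸ hzr)).lt_or_gt with h | h
  · refine ⟨zl, mem hzlc, c₁, mem hc₁c, zr, mem hzrc, hzlc, hc₁c, hzrc, h₁,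
      h₁₂, fun hlr => h₁ ?_, hσ₁, h, Or.inl ⟨hzl, hc₁, hzr⟩⟩
    exact hσ.sameVennClass_of_le hsub hconn hzlc hlr (mem hzlc) (mem hc₁c) (mem hzrc) hσ₁.le
      h.le
  · refine ⟨c₂, mem hc₂c, zr, mem hzrc, c₁, mem hc₁c, hc₂c, hzrc, hc₁c, fun h => h₂ h.symm,
      fun h => h₁₂ h.symm, fun h₂₁ => h₂ ?_, hσ₂, h, Or.inr ⟨hc₂, hzr, hc₁, hZQ⟩⟩
    exact (hσ.sameVennClass_of_le hsub hconn hc₂c h₂₁ (mem hc₂c) (mem hzrc) (mem hc₁c)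
      hσ₂.le h.le).symm

lemma hasViolation_of_not_sameVennClass_left (hsub : ∀ R ∈ F, R ⊆ U)
    (hσ : IsC1POrdering U F σ)
    (hconn : (overlapGraph F).Connected) (hZQ : ¬ ∀ x ∈ Z, IsConstrained F x)
    {zl zr c₁ c₂ : α} (hzl : zl ∈ Z) (hzr : zr ∈ Z) (hc₁ : c₁ ∉ Z) (hc₂ : c₂ ∉ Z)
    (hzlc : IsConstrained F zl) (hzrc : IsConstrained F zr) (hc₁c : IsConstrained F c₁)
    (hc₂c : IsConstrained F c₂) (h₁ : ¬ SameVennClass F zl c₁) (hσ₁ : σ zl < σ c₁)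
    (h₂ : ¬ SameVennClass F zr c₂) (hσ₂ : σ c₂ < σ zr) (h₂₁ : ¬ SameVennClass F c₂ zl) :
    HasViolation U F Z σ := by
  have mem := fun {x} (hx : IsConstrained F x) => hx.mem hsub
  refine HasViolation.of_revOrder (hasViolation_of_not_sameVennClass_right hsub hσ.rev hconn
    hZQ hzr hzl hc₂ hc₁ hzrc hzlc hc₂c hc₁c h₂ ?_ h₁ ?_ h₂₁)
  · exact (revOrder_lt_revOrder (mem hzrc) (mem hc₂c)).2 hσ₂
  · exact (revOrder_lt_revOrder (mem hc₁c) (mem hzlc)).2 hσ₁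

lemma exists_of_not_rightClosed (hsub : ∀ R ∈ F, R ⊆ U) (hσ : IsC1POrdering U F σ)
    (hconn : (overlapGraph F).Connected) (h : ¬ RightClosed U F Z σ) {zl : α}
    (hzlc : IsConstrained F zl) (hzl_min : ∀ b ∈ Z, IsConstrained F b → σ zl ≤ σ b) :
    ∃ c, c ∉ Z ∧ IsConstrained F c ∧ ¬ SameVennClass F zl c ∧ σ zl < σ c := by
  simp only [RightClosed, not_forall, exists_prop] at h
  obtain ⟨b, hb, hbc, c, hcU, hc, hbc', hσbc, hcZ⟩ := h
  have hle := hzl_min b hb hbc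
  refine ⟨c, hcZ, hc, fun hzc => hbc' ?_, hle.trans_lt hσbc⟩
  exact (hσ.sameVennClass_of_le hsub hconn hzlc hzc (hzlc.mem hsub) (hbc.mem hsub) hcU hle
    hσbc.le).symm.trans hzc

lemma hasViolation_of_not_rightClosed (hsub : ∀ R ∈ F, R ⊆ U) (hσ : IsC1POrdering U F σ)
    (hconn : (overlapGraph F).Connected) (hZQ : ¬ ∀ x ∈ Z, IsConstrained F x)
    (h₁ : ¬ RightClosed U F Z σ) (h₂ : ¬ RightClosed U F Z (revOrder U σ)) :
    HasViolation U F Z σ := by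
  have mem := fun {x} (hx : IsConstrained F x) => hx.mem hsub
  obtain ⟨zl, hzl, zr, hzr, hzlc, hzrc, hbounds⟩ := exists_first_last (σ := σ) (by
    simp only [RightClosed, not_forall] at h₁
    obtain ⟨b, hb, hbc, -⟩ := h₁
    exact ⟨b, hb, hbc⟩)
  obtain ⟨c₁, hc₁, hc₁c, hlc₁, hσ₁⟩ := exists_of_not_rightClosed hsub hσ hconn h₁ hzlc
    fun b hb hbc => (hbounds b hb hbc).1
  obtain ⟨c₂, hc₂, hc₂c, hrc₂, hσ₂⟩ := exists_of_not_rightClosed hsub hσ.rev hconn h₂ hzrc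
    fun b hb hbc => (revOrder_le_revOrder (mem hzrc) (mem hbc)).2 (hbounds b hb hbc).2
  rw [revOrder_lt_revOrder (mem hzrc) (mem hc₂c)] at hσ₂
  by_contra hno
  have hc₁r : SameVennClass F c₁ zr := by_contra fun h => hno
    (hasViolation_of_not_sameVennClass_right hsub hσ hconn hZQ hzl hzr hc₁ hc₂ hzlc hzrc hc₁c
      hc₂c hlc₁ hσ₁ hrc₂ hσ₂ h)
  have hc₂l : SameVennClass F c₂ zl := by_contra fun h => hno
    (hasViolation_of_not_sameVennClass_left hsub hσ hconn hZQ hzl hzr hc₁ hc₂ hzlc hzrc hc₁c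
      hc₂c hlc₁ hσ₁ hrc₂ hσ₂ h)
  obtain ⟨w, hwc, hlw, hrw⟩ := exists_third_class hconn hzlc hzrc
    fun h => hrc₂ (h.symm.trans hc₂l.symm)
  have hwl : σ w ≠ σ zl :=
    hσ.1.ne (mem hwc) (mem hzlc) fun h => hlw (h ▸ SameVennClass.refl F w)
  by_cases hw : w ∈ Z
  · -- `w` comes after `zl`, hence after the whole class of `zl`, which contains `c₂`
    have hlw' := lt_of_le_of_ne (hbounds w hw hwc).1 hwl.symm
    have hc₂w : σ c₂ < σ w := by
      by_contra! h
      exact hlw (hσ.sameVennClass_of_le hsub hconn hzlc hc₂l.symm (mem hzlc) (mem hwc)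
        (mem hc₂c) hlw'.le h)
    exact hno (hasViolation_of_not_sameVennClass_right hsub hσ hconn hZQ hzl hw hc₁ hc₂ hzlc
      hwc hc₁c hc₂c hlc₁ hσ₁ (fun h => hlw (hc₂l.symm.trans h.symm)) hc₂w
      fun h => hrw (hc₁r.symm.trans h))
  · rcases hwl.lt_or_gt with h | h
    · exact hno (hasViolation_of_not_sameVennClass_left hsub hσ hconn hZQ hzl hzr hc₁ hw hzlc
        hzrc hc₁c hwc hlc₁ hσ₁ hrw (h.trans_le (hbounds zr hzr hzrc).1) fun h => hlw h.symm)
    · exact hno (hasViolation_of_not_sameVennClass_right hsub hσ hconn hZQ hzl hzr hw hc₂ hzlc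
        hzrc hwc hc₂c hlw h hrc₂ hσ₂ fun h => hrw h.symm)

end Dichotomy

end Development

theorem fails_C1P_iff_violation_general {α : Type*} [DecidableEq α]
    (U : Finset α) (𝓡' : Finset (Finset α)) (hsub : ∀ R ∈ 𝓡', R ⊆ U)
    (hC1P : HasC1P U 𝓡')
    (hconn : (overlapGraph 𝓡').Connected)
    (Z : Finset α) (hZU : Z ⊆ U) :
    ¬ HasC1P U (insert Z 𝓡') ↔
      ∃ σ : α → ℕ, IsC1POrdering U 𝓡' σ ∧
        ∃ a ∈ U, ∃ b ∈ U, ∃ c ∈ U,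
          (∃ R ∈ 𝓡', a ∈ R) ∧ (∃ R ∈ 𝓡', b ∈ R) ∧ (∃ R ∈ 𝓡', c ∈ R) ∧
          ¬ (∀ R ∈ 𝓡', (a ∈ R ↔ b ∈ R)) ∧ ¬ (∀ R ∈ 𝓡', (b ∈ R ↔ c ∈ R)) ∧
          ¬ (∀ R ∈ 𝓡', (a ∈ R ↔ c ∈ R)) ∧
          σ a < σ b ∧ σ b < σ c ∧
          ((a ∈ Z ∧ b ∉ Z ∧ c ∈ Z) ∨
            (a ∉ Z ∧ b ∈ Z ∧ c ∉ Z ∧ ¬ ∀ x ∈ Z, ∃ R ∈ 𝓡', x ∈ R)) := by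
  change _ ↔ ∃ σ, IsC1POrdering U 𝓡' σ ∧ HasViolation U 𝓡' Z σ
  refine ⟨fun hfail => ?_, fun ⟨σ, hσ, h⟩ =>
    not_hasC1P_insert_of_hasViolation hsub hconn hZU hσ h⟩
  obtain ⟨σ, hσ⟩ := hC1P
  by_contra! hno
  refine hfail ?_
  by_cases hZQ : ∀ x ∈ Z, IsConstrained 𝓡' x
  · exact hasC1P_insert_of_subset hsub hσ hconn hZQ (hno σ hσ)
  by_cases h₁ : RightClosed U 𝓡' Z σ
  · exact hasC1P_insert_of_rightClosed hsub hσ hconn h₁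
  by_cases h₂ : RightClosed U 𝓡' Z (revOrder U σ)
  · exact hasC1P_insert_of_rightClosed hsub hσ.rev hconn h₂
  exact (hno σ hσ (hasViolation_of_not_rightClosed hsub hσ hconn hZQ h₁ h₂)).elim

/-- Let `𝓡'` be a nonempty family with the consecutive-ones property
over `U` whose overlap graph is connected, and let `Q = ⋃ 𝓡'`. Then `𝓡' ∪ {Z}` fails
C1P iff some consecutive-ones ordering `σ` of `𝓡'` places columns `a, b, c` of three
pairwise distinct constrained Venn classes of `𝓡'` with `σ a < σ b < σ c` forming a
1-0-1 configuration for `Z`, or a 0-1-0 configuration for `Z` with `Z ⊄ Q`. -/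
theorem fails_C1P_iff_violation {α : Type*} [DecidableEq α]
    (U : Finset α) (𝓡' : Finset (Finset α)) (hsub : ∀ R ∈ 𝓡', R ⊆ U)
    (hne : 𝓡'.Nonempty) (hC1P : HasC1P U 𝓡')
    (hconn : (overlapGraph 𝓡').Connected)
    (Z : Finset α) (hZU : Z ⊆ U) :
    ¬ HasC1P U (insert Z 𝓡') ↔
      ∃ σ : α → ℕ, IsC1POrdering U 𝓡' σ ∧
        ∃ a ∈ U, ∃ b ∈ U, ∃ c ∈ U,
          (∃ R ∈ 𝓡', a ∈ R) ∧ (∃ R ∈ 𝓡', b ∈ R) ∧ (∃ R ∈ 𝓡', c ∈ R) ∧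
          ¬ (∀ R ∈ 𝓡', (a ∈ R ↔ b ∈ R)) ∧ ¬ (∀ R ∈ 𝓡', (b ∈ R ↔ c ∈ R)) ∧
          ¬ (∀ R ∈ 𝓡', (a ∈ R ↔ c ∈ R)) ∧
          σ a < σ b ∧ σ b < σ c ∧
          ((a ∈ Z ∧ b ∉ Z ∧ c ∈ Z) ∨
            (a ∉ Z ∧ b ∈ Z ∧ c ∉ Z ∧ ¬ ∀ x ∈ Z, ∃ R ∈ 𝓡', x ∈ R)) :=
  fails_C1P_iff_violation_general U 𝓡' hsub hC1P hconn Z hZU
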